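/- arXiv:2205.11353 — 5 statements merged into one kernel-verified Lean document; each statement's English description precedes it below -/
import Mathlib

section
/- For any real numbers b and σ with σ > 0, the integral over all real t of Φ((b−t)/σ)·Φ((t−b)/σ) dt equals σ/√π, where Φ is the CDF of the standard normal distribution. -/
/-!
Substituting `u = (t - b) / σ` reduces the claim to `∫ Φ(u) Φ(-u) du = 1 / √π`. The integrand has
an explicit primitive `F`, and `F(u) + F(-u) = 1 / √π`, so only the limit of `F` at `+∞` is needed;
it follows from the Gaussian tail bound `Φ(-u) ≤ exp (-u² / 2) / 2` for `u ≥ 0`, which also gives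
integrability.
-/

open MeasureTheory Real Filter

noncomputable def phi (t : ℝ) : ℝ := Real.exp (-t^2/2) / Real.sqrt (2*Real.pi)

noncomputable def Phi (x : ℝ) : ℝ := ∫ s in Set.Iic x, phi s

open scoped Topology

lemma integral_Iic_comp_add_right {E : Type*} [NormedAddCommGroup E] [NormedSpace ℝ E]
    (f : ℝ → E) (a c : ℝ) : ∫ s in Set.Iic a, f (s + c) = ∫ s in Set.Iic (a + c), f s := by
  have h := (measurableEmbedding_addRight c).setIntegral_map (μ := volume) f (Set.Iic (a + c))
  rw [map_add_right_eq_self] at h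
  rw [h, Set.preimage_add_const_Iic, add_sub_cancel_right]

lemma tendsto_abs_rpow_mul_exp_neg_sq_div_two_atTop (s : ℝ) :
    Tendsto (fun u : ℝ => |u| ^ s * exp (-u ^ 2 / 2)) atTop (𝓝 0) :=
  ((tendsto_rpow_abs_mul_exp_neg_mul_sq_cocompact one_half_pos s).mono_left
    atTop_le_cocompact).congr fun u => by ring_nf

lemma phi_eq_mul_exp : phi = fun t => (√(2 * π))⁻¹ * exp (-2⁻¹ * t ^ 2) := by
  ext t
  rw [phi, div_eq_inv_mul]
  ring_nf

lemma continuous_phi : Continuous phi := by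
  unfold phi
  fun_prop

lemma phi_nonneg (t : ℝ) : 0 ≤ phi t := by
  unfold phi
  positivity

lemma phi_neg (t : ℝ) : phi (-t) = phi t := by
  simp [phi]

lemma integrable_phi : Integrable phi := by
  rw [phi_eq_mul_exp]
  exact (integrable_exp_neg_mul_sq (by norm_num)).const_mul _

lemma integral_phi : ∫ t, phi t = 1 := by
  rw [phi_eq_mul_exp, integral_const_mul, integral_gaussian, div_inv_eq_mul, mul_comm π]
  exact inv_mul_cancel₀ (by positivity)

lemma hasDerivAt_phi (t : ℝ) : HasDerivAt phi (-t * phi t) t := by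
  have h : HasDerivAt (fun s => -s ^ 2 / 2) (-t) t :=
    ((hasDerivAt_pow 2 t).neg.div_const 2).congr_deriv (by push_cast; ring)
  exact (h.exp.div_const _).congr_deriv (by rw [phi]; ring)

lemma tendsto_phi_atTop : Tendsto phi atTop (𝓝 0) := by
  have h := (tendsto_abs_rpow_mul_exp_neg_sq_div_two_atTop 0).div_const (√(2 * π))
  rw [zero_div] at h
  exact h.congr fun u => by rw [rpow_zero, one_mul, phi]

lemma two_mul_phi_sq (t : ℝ) : 2 * phi t ^ 2 = √2 * phi (√2 * t) / √π := by
  have hsq : phi t ^ 2 = exp (-t ^ 2) / (2 * π) := by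
    rw [phi, div_pow, sq_sqrt (by positivity), ← exp_nat_mul]
    ring_nf
  have hscaled : phi (√2 * t) = exp (-t ^ 2) / (√2 * √π) := by
    rw [phi, mul_pow, sq_sqrt zero_le_two, sqrt_mul zero_le_two]
    ring_nf
  rw [hsq, hscaled]
  field_simp
  exact sq_sqrt pi_pos.le

lemma Phi_nonneg (x : ℝ) : 0 ≤ Phi x :=
  setIntegral_nonneg measurableSet_Iic fun s _ => phi_nonneg s

lemma Phi_le_one (x : ℝ) : Phi x ≤ 1 :=
  integral_phi ▸ setIntegral_le_integral integrable_phi (Eventually.of_forall phi_nonneg)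

lemma Phi_neg (x : ℝ) : Phi (-x) = ∫ s in Set.Ioi x, phi s := by
  simp_rw [Phi, ← integral_comp_neg_Ioi, phi_neg]

lemma Phi_add_Phi_neg (x : ℝ) : Phi x + Phi (-x) = 1 := by
  rw [Phi_neg, Phi, intervalIntegral.integral_Iic_add_Ioi integrable_phi.integrableOn
    integrable_phi.integrableOn, integral_phi]

lemma Phi_zero : Phi 0 = 1 / 2 := by
  have h := Phi_add_Phi_neg 0
  rw [neg_zero] at h
  linarith

lemma hasDerivAt_Phi (x : ℝ) : HasDerivAt Phi (phi x) x := by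
  have h : ∀ y, Phi 0 + ∫ t in (0 : ℝ)..y, phi t = Phi y := fun y => by
    rw [← intervalIntegral.integral_Iic_sub_Iic integrable_phi.integrableOn
      integrable_phi.integrableOn, Phi, Phi, add_sub_cancel]
  refine ((intervalIntegral.integral_hasDerivAt_right (a := 0) integrable_phi.intervalIntegrable
    continuous_phi.stronglyMeasurable.stronglyMeasurableAtFilter
    continuous_phi.continuousAt).const_add (Phi 0)).congr_of_eventuallyEq ?_
  exact Eventually.of_forall fun y => (h y).symm

lemma continuous_Phi : Continuous Phi :=
  continuous_iff_continuousAt.2 fun x => (hasDerivAt_Phi x).continuousAt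

lemma hasDerivAt_Phi_neg (x : ℝ) : HasDerivAt (fun u => Phi (-u)) (-phi x) x := by
  simpa [phi_neg, Function.comp_def] using (hasDerivAt_Phi (-x)).comp x (hasDerivAt_neg x)

lemma Phi_neg_le {u : ℝ} (hu : 0 ≤ u) : Phi (-u) ≤ exp (-u ^ 2 / 2) / 2 := by
  have hdom : ∀ s ∈ Set.Iic (-u), phi s ≤ exp (-u ^ 2 / 2) * phi (s + u) := by
    intro s hs
    rw [phi, phi, ← mul_div_assoc, ← exp_add]
    gcongr
    nlinarith [mul_nonneg hu (by linarith [Set.mem_Iic.1 hs] : 0 ≤ -(s + u))]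
  calc Phi (-u) ≤ ∫ s in Set.Iic (-u), exp (-u ^ 2 / 2) * phi (s + u) :=
        setIntegral_mono_on integrable_phi.integrableOn
          ((integrable_phi.comp_add_right u).const_mul _).integrableOn measurableSet_Iic hdom
    _ = exp (-u ^ 2 / 2) / 2 := by
        rw [integral_const_mul, integral_Iic_comp_add_right phi, neg_add_cancel, ← Phi,
          Phi_zero, mul_one_div]

lemma tendsto_mul_Phi_neg_atTop : Tendsto (fun u => u * Phi (-u)) atTop (𝓝 0) := by
  have h := (tendsto_abs_rpow_mul_exp_neg_sq_div_two_atTop 1).div_const 2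
  rw [zero_div] at h
  refine squeeze_zero' ?_ ?_ h
  · filter_upwards [eventually_ge_atTop 0] with u hu
    exact mul_nonneg hu (Phi_nonneg _)
  · filter_upwards [eventually_ge_atTop 0] with u hu
    rw [rpow_one, abs_of_nonneg hu, mul_div_assoc]
    exact mul_le_mul_of_nonneg_left (Phi_neg_le hu) hu

lemma tendsto_Phi_neg_atTop : Tendsto (fun u => Phi (-u)) atTop (𝓝 0) := by
  have h := (tendsto_abs_rpow_mul_exp_neg_sq_div_two_atTop 0).div_const 2
  rw [zero_div] at h
  refine squeeze_zero' (Eventually.of_forall fun u => Phi_nonneg _) ?_ h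
  filter_upwards [eventually_ge_atTop 0] with u hu
  rw [rpow_zero, one_mul]
  exact Phi_neg_le hu

lemma tendsto_Phi_atTop : Tendsto Phi atTop (𝓝 1) := by
  have h := tendsto_Phi_neg_atTop.const_sub 1
  rw [sub_zero] at h
  exact h.congr fun u => by linarith [Phi_add_Phi_neg u]

lemma Phi_mul_Phi_neg_le (u : ℝ) : Phi u * Phi (-u) ≤ exp (-u ^ 2 / 2) / 2 := by
  have key : ∀ v, 0 ≤ v → Phi v * Phi (-v) ≤ exp (-v ^ 2 / 2) / 2 := fun v hv =>
    (mul_le_of_le_one_left (Phi_nonneg _) (Phi_le_one v)).trans (Phi_neg_le hv)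
  rcases le_total 0 u with hu | hu
  · exact key u hu
  · simpa [mul_comm] using key (-u) (neg_nonneg.2 hu)

lemma integrable_Phi_mul_Phi_neg : Integrable fun u => Phi u * Phi (-u) := by
  refine ((integrable_exp_neg_mul_sq (b := 2⁻¹) (by norm_num)).div_const 2).mono'
    (continuous_Phi.mul (continuous_Phi.comp continuous_neg)).aestronglyMeasurable
    (Eventually.of_forall fun u => ?_)
  rw [norm_of_nonneg (mul_nonneg (Phi_nonneg _) (Phi_nonneg _))]
  convert Phi_mul_Phi_neg_le u using 3
  ring

/-- Found by integrating by parts twice, using `(Φ(u) Φ(-u))' = φ(u) (Φ(-u) - Φ(u))` and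
`φ'(u) = -u φ(u)`; what remains is `∫ 2 φ²`, a rescaled Gaussian. -/
noncomputable def primitivePhiMulPhiNeg (u : ℝ) : ℝ :=
  u * (Phi u * Phi (-u)) - phi u * (Phi u - Phi (-u)) + Phi (√2 * u) / √π

lemma hasDerivAt_primitivePhiMulPhiNeg (u : ℝ) :
    HasDerivAt primitivePhiMulPhiNeg (Phi u * Phi (-u)) u := by
  have hscaled : HasDerivAt (fun u => Phi (√2 * u)) (phi (√2 * u) * √2) u := by
    simpa [Function.comp_def] using
      (hasDerivAt_Phi (√2 * u)).comp u ((hasDerivAt_id u).const_mul √2)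
  have hP := hasDerivAt_Phi u
  have hPn := hasDerivAt_Phi_neg u
  refine ((((hasDerivAt_id u).mul (hP.mul hPn)).sub ((hasDerivAt_phi u).mul (hP.sub hPn))).add
    (hscaled.div_const √π)).congr_deriv ?_
  simp only [id_eq, Pi.mul_apply, Pi.sub_apply]
  linear_combination -two_mul_phi_sq u

lemma primitivePhiMulPhiNeg_add_neg (u : ℝ) :
    primitivePhiMulPhiNeg u + primitivePhiMulPhiNeg (-u) = (√π)⁻¹ := by
  have h := Phi_add_Phi_neg (√2 * u)
  simp only [primitivePhiMulPhiNeg, neg_neg, phi_neg, mul_neg]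
  linear_combination h / √π

lemma tendsto_primitivePhiMulPhiNeg_atTop :
    Tendsto primitivePhiMulPhiNeg atTop (𝓝 (√π)⁻¹) := by
  have hscaled := tendsto_Phi_atTop.comp (tendsto_id.const_mul_atTop (by positivity : 0 < √2))
  have h := ((tendsto_Phi_atTop.mul tendsto_mul_Phi_neg_atTop).sub
    (tendsto_phi_atTop.mul (tendsto_Phi_atTop.sub tendsto_Phi_neg_atTop))).add
    (hscaled.div_const √π)
  simp only [mul_zero, zero_mul, sub_zero, zero_add, one_div] at h
  exact h.congr fun u => by simp only [primitivePhiMulPhiNeg, Function.comp_apply, id]; ring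

lemma tendsto_primitivePhiMulPhiNeg_atBot : Tendsto primitivePhiMulPhiNeg atBot (𝓝 0) := by
  have h := (tendsto_primitivePhiMulPhiNeg_atTop.comp tendsto_neg_atBot_atTop).const_sub (√π)⁻¹
  rw [sub_self] at h
  exact h.congr fun u => by
    simp only [Function.comp_apply]
    linarith [primitivePhiMulPhiNeg_add_neg u]

lemma integral_Phi_mul_Phi_neg : ∫ u, Phi u * Phi (-u) = (√π)⁻¹ := by
  rw [integral_of_hasDerivAt_of_tendsto hasDerivAt_primitivePhiMulPhiNeg
    integrable_Phi_mul_Phi_neg tendsto_primitivePhiMulPhiNeg_atBot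
    tendsto_primitivePhiMulPhiNeg_atTop, sub_zero]

theorem stmt0 (b σ : ℝ) (hσ : 0 < σ) :
    ∫ t : ℝ, Phi ((b - t) / σ) * Phi ((t - b) / σ) = σ / Real.sqrt Real.pi := by
  have hsymm : ∀ t, (t - b) / σ = -((b - t) / σ) := fun t => by ring
  simp_rw [hsymm]
  rw [integral_sub_left_eq_self (fun t => Phi (t / σ) * Phi (-(t / σ))) volume b,
    Measure.integral_comp_div (fun u => Phi u * Phi (-u)), integral_Phi_mul_Phi_neg,
    abs_of_pos hσ, smul_eq_mul, div_eq_mul_inv]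
end

section
/- Let A and B be finite multisets of real numbers of equal cardinality and σ > 0. If Σ_{a∈A} φ((x−a)/σ) = Σ_{b∈B} φ((x−b)/σ) for all real x, then for every natural number n, Σ_{a∈A} aⁿ = Σ_{b∈B} bⁿ. -/
open MeasureTheory Real Filter

/-!
Completing the square gives `φ(y - c) = φ(y) · exp(c y - c²/2)`, so after substituting
`x = σ y` and cancelling `φ(y)` the hypothesis says that the multisets `A/σ` and `B/σ` have the
same sums of `exp(c y - c²/2)`. The exponentials `y ↦ exp(c y)` are distinct characters of
`(ℝ, +)`, hence linearly independent (Dedekind), and so a multiset is determined by such a sum.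
Thus `A = B`.
-/

theorem LinearIndependent.injective_multiset_sum_map {ι R M : Type*} [Ring R] [CharZero R]
    [AddCommGroup M] [Module R M] {v : ι → M} (hv : LinearIndependent R v) :
    Function.Injective fun A : Multiset ι => (A.map v).sum := by
  classical
  have sum_map_eq : ∀ A : Multiset ι, (A.map v).sum =
      Finsupp.linearCombination R v (A.toFinsupp.mapRange (↑) Nat.cast_zero) := by
    intro A
    induction A using Multiset.induction_on with
    | empty => simp
    | cons a A ih =>
      rw [← Multiset.singleton_add, map_add, Finsupp.mapRange_add Nat.cast_add]
      simp [ih]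
  intro A B (h : (A.map v).sum = (B.map v).sum)
  rw [sum_map_eq, sum_map_eq] at h
  exact Multiset.toFinsupp.injective (Finsupp.mapRange_injective _ _ Nat.cast_injective (hv h))

theorem Real.linearIndependent_exp_mul : LinearIndependent ℝ fun c x : ℝ => exp (c * x) := by
  let χ : ℝ → Multiplicative ℝ →* ℝ := fun c =>
    { toFun x := exp (c * x.toAdd)
      map_one' := by simp
      map_mul' x y := by simp [mul_add, exp_add] }
  have hχ : Function.Injective χ := fun c d h => by
    simpa [χ] using DFunLike.congr_fun h (Multiplicative.ofAdd 1)
  exact (linearIndependent_monoidHom (Multiplicative ℝ) ℝ).comp χ hχ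

theorem Real.linearIndependent_exp_mul_sub_sq :
    LinearIndependent ℝ fun c x : ℝ => exp (c * x - c ^ 2 / 2) := by
  convert linearIndependent_exp_mul.units_smul fun c => Units.mk0 (exp (-c ^ 2 / 2)) (exp_ne_zero _)
    using 1
  ext c x
  simp [Units.smul_def, ← exp_add, sub_eq_neg_add, neg_div]

theorem phi_sub (y c : ℝ) : phi (y - c) = phi y * exp (c * y - c ^ 2 / 2) := by
  rw [phi, phi, mul_comm, div_mul_eq_mul_div, ← exp_add]
  ring_nf

theorem phi_pos (y : ℝ) : 0 < phi y := by unfold phi; positivity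

theorem stmt13_general (A B : Multiset ℝ) (σ : ℝ) (hσ : 0 < σ)
    (h : ∀ x : ℝ, (A.map (fun a => phi ((x - a) / σ))).sum =
      (B.map (fun b => phi ((x - b) / σ))).sum) :
    ∀ n : ℕ, (A.map (fun a => a ^ n)).sum = (B.map (fun b => b ^ n)).sum := by
  have hscaled : A.map (· / σ) = B.map (· / σ) := by
    refine linearIndependent_exp_mul_sub_sq.injective_multiset_sum_map (funext fun y => ?_)
    have hy := h (σ * y)
    simp only [Multiset.map_map, Function.comp_def, Pi.multiset_sum_apply] at hy ⊢
    simp only [sub_div, mul_div_cancel_left₀ _ hσ.ne', phi_sub, Multiset.sum_map_mul_left] at hy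
    exact mul_left_cancel₀ (phi_pos y).ne' hy
  have hAB : A = B := Multiset.map_injective (fun a b => (div_left_inj' hσ.ne').mp) hscaled
  intro n
  rw [hAB]

theorem stmt13 (A B : Multiset ℝ) (hcard : A.card = B.card) (σ : ℝ) (hσ : 0 < σ)
    (h : ∀ x : ℝ, (A.map (fun a => phi ((x - a) / σ))).sum =
      (B.map (fun b => phi ((x - b) / σ))).sum) :
    ∀ n : ℕ, (A.map (fun a => a ^ n)).sum = (B.map (fun b => b ^ n)).sum :=
  stmt13_general A B σ hσ h
end

section
/- Let A and B be finite multisets of points in ℝ² of equal cardinality and σ > 0. If Σ_{(a,b)∈A} φ((x−a)/σ)·φ((y−b)/σ) = Σ_{(α,β)∈B} φ((x−α)/σ)·φ((y−β)/σ) for all (x,y) ∈ ℝ², then for all natural numbers m₁, m₂, Σ_{(a,b)∈A} a^{m₁} b^{m₂} = Σ_{(α,β)∈B} α^{m₁} β^{m₂}. -/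
open MeasureTheory Real Filter

/-! The Gaussian translate `(x, y) ↦ φ((x - a)/σ) φ((y - b)/σ)` is a nowhere-vanishing function
of `(x, y)`, times a nonzero constant depending on `(a, b)`, times the exponential character
`exp ((x a + y b)/σ²)`. Distinct points give distinct characters, which are linearly independent
by Dedekind's theorem, so the Gaussian translates are linearly independent. A mixture of linearly
independent functions determines its multiset of components, hence `A = B` and all moments agree. -/

theorem LinearIndependent.multiset_sum_map_injective {K M α : Type*} [Semiring K] [CharZero K]
    [AddCommMonoid M] [Module K M] {v : α → M} (hv : LinearIndependent K v) :
    Function.Injective fun A : Multiset α => (A.map v).sum := by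
  classical
  let coeffs : Multiset α →+ (α →₀ K) :=
    (Finsupp.mapRange.addMonoidHom (Nat.castAddMonoidHom K)).comp Multiset.toFinsupp.toAddMonoidHom
  have hsum : ∀ A : Multiset α, (A.map v).sum = Finsupp.linearCombination K v (coeffs A) := by
    intro A
    induction A using Multiset.induction_on with
    | empty => simp
    | cons a A ih =>
      rw [Multiset.map_cons, Multiset.sum_cons, ih, ← Multiset.singleton_add, map_add, map_add]
      simp [coeffs]
  intro A B hAB
  have hc : coeffs A = coeffs B := hv (by simpa only [hsum] using hAB)
  refine Multiset.toFinsupp.injective (Finsupp.mapRange_injective _ Nat.cast_zero ?_ hc)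
  exact Nat.cast_injective

theorem linearIndependent_exp_comp {ι E : Type*} [AddCommMonoid E] {L : ι → E →+ ℝ}
    (hL : Function.Injective L) : LinearIndependent ℝ fun i (z : E) => exp (L i z) := by
  let χ : ι → (Multiplicative E →* ℝ) := fun i => Real.expMonoidHom.comp (L i).toMultiplicative
  have hχ : Function.Injective χ := by
    intro i j hij
    refine hL (AddMonoidHom.ext fun z => ?_)
    exact exp_injective (DFunLike.congr_fun hij (Multiplicative.ofAdd z))
  exact (linearIndependent_monoidHom (Multiplicative E) ℝ).comp χ hχ

theorem LinearIndependent.mul_left_of_ne_zero {K ι X : Type*} [Field K] {v : ι → X → K}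
    (hv : LinearIndependent K v) {g : X → K} (hg : ∀ x, g x ≠ 0) :
    LinearIndependent K fun i x => g x * v i x := by
  refine hv.map' (LinearMap.mulLeft K g) (LinearMap.ker_eq_bot.mpr fun f₁ f₂ hf => ?_)
  funext x
  exact mul_left_cancel₀ (hg x) (congr_fun hf x)

theorem LinearIndependent.mul_right_of_ne_zero {K ι X : Type*} [Field K] {v : ι → X → K}
    (hv : LinearIndependent K v) {c : ι → K} (hc : ∀ i, c i ≠ 0) :
    LinearIndependent K fun i x => c i * v i x :=
  hv.units_smul fun i => Units.mk0 (c i) (hc i)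

theorem phi_mul_phi {σ : ℝ} (hσ : σ ≠ 0) (x y a b : ℝ) :
    phi ((x - a) / σ) * phi ((y - b) / σ) =
      exp (-(x ^ 2 + y ^ 2) / (2 * σ ^ 2)) / (2 * π) *
        (exp (-(a ^ 2 + b ^ 2) / (2 * σ ^ 2)) * exp ((x * a + y * b) / σ ^ 2)) := by
  rw [phi, phi, div_mul_div_comm, mul_self_sqrt (by positivity), ← exp_add, ← exp_add,
    div_mul_eq_mul_div, ← exp_add]
  congr 2
  field_simp
  ring

theorem linearIndependent_phi_mul_phi {σ : ℝ} (hσ : σ ≠ 0) :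
    LinearIndependent ℝ fun (p z : ℝ × ℝ) => phi ((z.1 - p.1) / σ) * phi ((z.2 - p.2) / σ) := by
  let L : ℝ × ℝ → (ℝ × ℝ →+ ℝ) := fun p =>
    AddMonoidHom.mk' (fun z => (z.1 * p.1 + z.2 * p.2) / σ ^ 2) fun z w => by
      simp only [Prod.fst_add, Prod.snd_add]; ring
  have hL : Function.Injective L := by
    intro p q hpq
    have h₁ := DFunLike.congr_fun hpq (σ ^ 2, 0)
    have h₂ := DFunLike.congr_fun hpq (0, σ ^ 2)
    simp only [L, AddMonoidHom.mk'_apply] at h₁ h₂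
    exact Prod.ext (by simpa [hσ] using h₁) (by simpa [hσ] using h₂)
  have hexp := ((linearIndependent_exp_comp hL).mul_right_of_ne_zero
    (c := fun p => exp (-(p.1 ^ 2 + p.2 ^ 2) / (2 * σ ^ 2))) fun _ => exp_ne_zero _)
    |>.mul_left_of_ne_zero (g := fun z => exp (-(z.1 ^ 2 + z.2 ^ 2) / (2 * σ ^ 2)) / (2 * π))
      fun _ => by positivity
  simpa only [phi_mul_phi hσ, L, AddMonoidHom.mk'_apply] using hexp

theorem stmt14_general (A B : Multiset (ℝ × ℝ)) (σ : ℝ) (hσ : 0 < σ)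
    (h : ∀ x y : ℝ,
      (A.map (fun p => phi ((x - p.1) / σ) * phi ((y - p.2) / σ))).sum =
      (B.map (fun p => phi ((x - p.1) / σ) * phi ((y - p.2) / σ))).sum) :
    ∀ m₁ m₂ : ℕ,
      (A.map (fun p => p.1 ^ m₁ * p.2 ^ m₂)).sum =
      (B.map (fun p => p.1 ^ m₁ * p.2 ^ m₂)).sum := by
  have hAB : A = B := by
    refine (linearIndependent_phi_mul_phi hσ.ne').multiset_sum_map_injective ?_
    funext z
    simpa only [Pi.multiset_sum_apply, Multiset.map_map, Function.comp_def] using h z.1 z.2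
  intro m₁ m₂
  rw [hAB]

theorem stmt14 (A B : Multiset (ℝ × ℝ)) (hcard : A.card = B.card) (σ : ℝ) (hσ : 0 < σ)
    (h : ∀ x y : ℝ,
      (A.map (fun p => phi ((x - p.1) / σ) * phi ((y - p.2) / σ))).sum =
      (B.map (fun p => phi ((x - p.1) / σ) * phi ((y - p.2) / σ))).sum) :
    ∀ m₁ m₂ : ℕ,
      (A.map (fun p => p.1 ^ m₁ * p.2 ^ m₂)).sum =
      (B.map (fun p => p.1 ^ m₁ * p.2 ^ m₂)).sum :=
  stmt14_general A B σ hσ h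
end

section
/- Let C and D be finite multisets of points in ℝ² lying strictly above the diagonal y = x (persistence diagrams) and σ > 0. If the unweighted persistence surfaces ρ_C(x,y) = Σ_{(b,d)∈C} φ((x−b)/σ)·φ((y−d)/σ) and ρ_D agree as functions on ℝ², then C = D as multisets. -/
/-!
Completing the square, `φ((x - b)/σ) φ((y - d)/σ)` is a Gaussian factor in `(x, y)` alone times
`e^{-(b² + d²)/2σ²} · e^{(bx + dy)/σ²}`. Dividing out the first factor, `ρ_C = ρ_D` becomes an
identity between positively weighted sums of the exponential characters `v ↦ e^{⟪p, v⟫/σ²}`,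
which are pairwise distinct and hence linearly independent (Dedekind–Artin); so every point has
the same multiplicity in `C` and in `D`.
-/

open MeasureTheory Real Filter

theorem Multiset.sum_map_eq_linearCombination {R M ι : Type*} [Semiring R] [AddCommMonoid M]
    [Module R M] [DecidableEq ι] (v : ι → M) (C : Multiset ι) :
    (C.map v).sum =
      Finsupp.linearCombination R v (C.toFinsupp.mapRange Nat.cast Nat.cast_zero) := by
  induction C using Multiset.induction_on with
  | empty => simp
  | cons a C ih =>
    rw [Multiset.map_cons, Multiset.sum_cons, ih, ← Multiset.singleton_add, Multiset.toFinsupp_add,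
      Finsupp.mapRange_add Nat.cast_add, _root_.map_add, Multiset.toFinsupp_singleton]
    simp

theorem LinearIndependent.eq_of_multiset_sum_map_eq {R M ι : Type*} [Semiring R] [CharZero R]
    [AddCommMonoid M] [Module R M] {v : ι → M} (hv : LinearIndependent R v) {C D : Multiset ι}
    (h : (C.map v).sum = (D.map v).sum) : C = D := by
  classical
  rw [Multiset.sum_map_eq_linearCombination (R := R),
    Multiset.sum_map_eq_linearCombination (R := R)] at h
  exact Multiset.toFinsupp.injective (Finsupp.mapRange_injective _ _ Nat.cast_injective (hv h))

noncomputable def expChar {F : Type*} [AddCommGroup F] [Module ℝ F] (ℓ : F →ₗ[ℝ] ℝ) :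
    Multiplicative F →* ℝ where
  toFun v := exp (ℓ v.toAdd)
  map_one' := by simp
  map_mul' v w := by simp [exp_add]

theorem linearIndependent_exp_comp_s15 {F : Type*} [AddCommGroup F] [Module ℝ F] :
    LinearIndependent ℝ (fun ℓ : F →ₗ[ℝ] ℝ => fun v => exp (ℓ v)) :=
  (linearIndependent_monoidHom (Multiplicative F) ℝ).comp expChar fun _ _ h =>
    LinearMap.ext fun v => exp_injective (DFunLike.congr_fun h (Multiplicative.ofAdd v))

theorem phi_mul_phi_eq {σ : ℝ} (hσ : σ ≠ 0) (x y b d : ℝ) :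
    phi ((x - b) / σ) * phi ((y - d) / σ) =
      exp (-(x ^ 2 + y ^ 2) / (2 * σ ^ 2)) / (2 * π) *
        (exp (-(b ^ 2 + d ^ 2) / (2 * σ ^ 2)) * exp ((b * x + d * y) / σ ^ 2)) := by
  have hsqrt : √(2 * π) * √(2 * π) = 2 * π := Real.mul_self_sqrt (by positivity)
  rw [phi, phi, div_mul_div_comm, hsqrt, ← exp_add, ← exp_add, div_mul_eq_mul_div, ← exp_add]
  congr 2
  field_simp
  ring

noncomputable def scaledDot (σ : ℝ) (p : ℝ × ℝ) : ℝ × ℝ →ₗ[ℝ] ℝ :=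
  (σ ^ 2)⁻¹ • (p.1 • LinearMap.fst ℝ ℝ ℝ + p.2 • LinearMap.snd ℝ ℝ ℝ)

theorem scaledDot_apply (σ : ℝ) (p v : ℝ × ℝ) :
    scaledDot σ p v = (p.1 * v.1 + p.2 * v.2) / σ ^ 2 := by
  simp [scaledDot, div_eq_inv_mul, mul_add]

theorem scaledDot_injective {σ : ℝ} (hσ : σ ≠ 0) : Function.Injective (scaledDot σ) := by
  intro p q h
  have h1 := LinearMap.congr_fun h (1, 0)
  have h2 := LinearMap.congr_fun h (0, 1)
  simp only [scaledDot_apply] at h1 h2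
  field_simp at h1 h2
  exact Prod.ext (by simpa using h1) (by simpa using h2)

theorem stmt15_general (C D : Multiset (ℝ × ℝ)) (σ : ℝ) (hσ : 0 < σ)
    (h : ∀ x y : ℝ,
      (C.map (fun p => phi ((x - p.1) / σ) * phi ((y - p.2) / σ))).sum =
      (D.map (fun p => phi ((x - p.1) / σ) * phi ((y - p.2) / σ))).sum) :
    C = D := by
  have hσ0 : σ ≠ 0 := hσ.ne'
  let w : ℝ × ℝ → ℝˣ := fun p =>
    Units.mk0 (exp (-(p.1 ^ 2 + p.2 ^ 2) / (2 * σ ^ 2))) (exp_ne_zero _)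
  have hli : LinearIndependent ℝ (w • fun p v => exp (scaledDot σ p v)) :=
    (linearIndependent_exp_comp_s15.comp _ (scaledDot_injective hσ0)).units_smul w
  refine hli.eq_of_multiset_sum_map_eq (funext fun v => ?_)
  have hv := h v.1 v.2
  simp only [phi_mul_phi_eq hσ0, Multiset.sum_map_mul_left] at hv
  simpa [Pi.multiset_sum_apply, w, scaledDot_apply, mul_comm] using
    mul_left_cancel₀ (by positivity) hv

theorem stmt15 (C D : Multiset (ℝ × ℝ)) (hC : ∀ p ∈ C, p.1 < p.2)
    (hD : ∀ p ∈ D, p.1 < p.2) (σ : ℝ) (hσ : 0 < σ)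
    (h : ∀ x y : ℝ,
      (C.map (fun p => phi ((x - p.1) / σ) * phi ((y - p.2) / σ))).sum =
      (D.map (fun p => phi ((x - p.1) / σ) * phi ((y - p.2) / σ))).sum) :
    C = D :=
  stmt15_general C D σ hσ h
end

section
/- Let A and B be equal-cardinality finite multisets of nonnegative reals such that Σ_{a∈A} aⁿ = Σ_{b∈B} bⁿ for all n ∈ ℕ. Then A = B as multisets. -/
open MeasureTheory Real Filter

/-! Newton's identities express `k * e_k` through `e_0, …, e_(k-1)` and the power sums
`p_1, …, p_k`; in characteristic zero one may divide by `k`, so the power sums determine every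
`e_k`. By Vieta's formulas the `e_k` and the cardinality determine `∏ (X - a)`, whose roots
recover the multiset. -/

open Finset Polynomial

namespace Multiset

variable {R : Type*} [CommRing R]

theorem mul_esymm_eq_sum (s : Multiset R) (k : ℕ) :
    k * s.esymm k = (-1) ^ (k + 1) * ∑ a ∈ HasAntidiagonal.antidiagonal k with a.1 < k,
      (-1) ^ a.1 * s.esymm a.1 * (s.map (· ^ a.2)).sum := by
  obtain ⟨n, f, rfl⟩ : ∃ (n : ℕ) (f : Fin n → R), univ.val.map f = s :=
    ⟨_, s.toList.get, by rw [Fin.univ_val_map, List.ofFn_get, coe_toList]⟩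
  have := congrArg (MvPolynomial.aeval f) (MvPolynomial.mul_esymm_eq_sum (Fin n) R k)
  simp only [map_mul, map_natCast, map_pow, map_neg, map_one, map_sum, MvPolynomial.psum,
    MvPolynomial.aeval_X, MvPolynomial.aeval_esymm_eq_multiset_esymm] at this
  simpa only [map_map, Function.comp_def, Finset.sum] using this

theorem esymm_eq_of_psum_eq [IsDomain R] [CharZero R] {s t : Multiset R}
    (h : ∀ n, 1 ≤ n → (s.map (· ^ n)).sum = (t.map (· ^ n)).sum) (k : ℕ) :
    s.esymm k = t.esymm k := by
  induction k using Nat.strong_induction_on with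
  | _ k ih =>
    rcases Nat.eq_zero_or_pos k with rfl | hk
    · simp [esymm]
    · refine mul_left_cancel₀ (Nat.cast_ne_zero.mpr hk.ne' : (k : R) ≠ 0) ?_
      rw [s.mul_esymm_eq_sum, t.mul_esymm_eq_sum]
      congr 1
      refine sum_congr rfl fun a ha => ?_
      rw [Finset.mem_filter, HasAntidiagonal.mem_antidiagonal] at ha
      rw [ih a.1 ha.2, h a.2 (by omega)]

theorem eq_of_esymm_eq [IsDomain R] {s t : Multiset R}
    (hcard : card s = card t) (h : ∀ k, s.esymm k = t.esymm k) : s = t := by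
  have hprod : (s.map fun a => X - C a).prod = (t.map fun a => X - C a).prod := by
    simp only [prod_X_sub_X_eq_sum_esymm, hcard, h]
  simpa only [roots_multiset_prod_X_sub_C] using congrArg roots hprod

end Multiset

theorem stmt16_general (A B : Multiset ℝ)
    (hcard : A.card = B.card)
    (h : ∀ n : ℕ, 1 ≤ n →
      (A.map (fun a => a ^ n)).sum = (B.map (fun b => b ^ n)).sum) :
    A = B :=
  Multiset.eq_of_esymm_eq hcard (Multiset.esymm_eq_of_psum_eq h)

theorem stmt16 (A B : Multiset ℝ) (hA : ∀ a ∈ A, 0 ≤ a) (hB : ∀ b ∈ B, 0 ≤ b)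
    (hcard : A.card = B.card)
    (h : ∀ n : ℕ, 1 ≤ n →
      (A.map (fun a => a ^ n)).sum = (B.map (fun b => b ^ n)).sum) :
    A = B :=
  stmt16_general A B hcard h
end
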